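/- There exists an absolute constant C > 0 such that the following holds. Let A > 0 and let U : [−1,1] → ℝ be continuous on [−1,1] and twice continuously differentiable on (−1,1), satisfying |U(y)| ≤ A(1−y²)(1 + |ln(1−y²)|), |U'(y)| ≤ A(1 + |ln(1−y²)|), and |U''(y)| ≤ A/(1−y²) for all y ∈ (−1,1). Then the associated axisymmetric no-swirl velocity field u is differentiable on ℝ³∖{x'=0} and its Jacobian satisfies |∇u(x)| ≤ C A / (|x| |x'|) for all x with x' ≠ 0. -/

import Mathlib

open Set

/-- The Euclidean norm of `x' = (x₁, x₂)`, the first two coordinates of `x ∈ ℝ³`. -/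
noncomputable def primeNorm3 (x : EuclideanSpace ℝ (Fin 3)) : ℝ :=
  Real.sqrt (x 0 ^ 2 + x 1 ^ 2)

/-- The axisymmetric no-swirl velocity field associated with the profile `U`. -/
noncomputable def velField (U : ℝ → ℝ) (x : EuclideanSpace ℝ (Fin 3)) :
    EuclideanSpace ℝ (Fin 3) :=
  WithLp.toLp 2 fun i =>
    if i = 0 then
      x 0 * deriv U (x 2 / ‖x‖) / ‖x‖ ^ 2 + x 0 * x 2 * U (x 2 / ‖x‖) / (‖x‖ * primeNorm3 x ^ 2)
    else if i = 1 then
      x 1 * deriv U (x 2 / ‖x‖) / ‖x‖ ^ 2 + x 1 * x 2 * U (x 2 / ‖x‖) / (‖x‖ * primeNorm3 x ^ 2)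
    else
      x 2 * deriv U (x 2 / ‖x‖) / ‖x‖ ^ 2 - U (x 2 / ‖x‖) / ‖x‖

/-- The Hilbert–Schmidt (Frobenius) norm of the Jacobian of `v` at `x`. -/
noncomputable def hsNorm (v : EuclideanSpace ℝ (Fin 3) → EuclideanSpace ℝ (Fin 3))
    (x : EuclideanSpace ℝ (Fin 3)) : ℝ :=
  Real.sqrt (∑ i : Fin 3, ∑ j : Fin 3, (fderiv ℝ v x (EuclideanSpace.single j 1) i) ^ 2)

/-!
Each component of `u` is built from the coordinates, `‖x‖`, `|x'|²` and the profile terms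
`U(y)`, `U'(y)` with `y = x₃/‖x‖` by sums, products and quotients. Carrying along, at the
point `x`, a bound for the value and one for the norm of the derivative of every building
block, the product and chain rules propagate them. The inputs are `|∇y| = |x'|/|x|²` and,
with `s = √(1 - y²) = |x'|/|x|`, the bounds `|U(y)| ≤ 2As`, `|U'(y)| ≤ 2A/s`,
`|U''(y)| ≤ A/s²`, which follow from `1 + |log s²| ≤ 2/s`. Every term of `∇u` then has size
`O(A/(|x||x'|))`.
-/

section Calculus

variable {E : Type*} [NormedAddCommGroup E] [NormedSpace ℝ E]

def HasFDerivBoundsAt (f : E → ℝ) (b d : ℝ) (x : E) : Prop :=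
  ∃ f' : E →L[ℝ] ℝ, HasFDerivAt f f' x ∧ |f x| ≤ b ∧ ‖f'‖ ≤ d

namespace HasFDerivBoundsAt

variable {f g : E → ℝ} {x : E} {b d b' d' : ℝ}

theorem differentiableAt (h : HasFDerivBoundsAt f b d x) : DifferentiableAt ℝ f x :=
  let ⟨_, hf, _⟩ := h; hf.differentiableAt

theorem norm_fderiv_le (h : HasFDerivBoundsAt f b d x) : ‖fderiv ℝ f x‖ ≤ d :=
  let ⟨_, hf, _, hd⟩ := h; hf.fderiv ▸ hd

theorem mono (h : HasFDerivBoundsAt f b d x) (hb : b ≤ b') (hd : d ≤ d') :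
    HasFDerivBoundsAt f b' d' x :=
  let ⟨f', hf, hfb, hfd⟩ := h; ⟨f', hf, hfb.trans hb, hfd.trans hd⟩

theorem add (hf : HasFDerivBoundsAt f b d x) (hg : HasFDerivBoundsAt g b' d' x) :
    HasFDerivBoundsAt (fun z => f z + g z) (b + b') (d + d') x := by
  obtain ⟨f', hf, hfb, hfd⟩ := hf
  obtain ⟨g', hg, hgb, hgd⟩ := hg
  exact ⟨f' + g', hf.add hg, (abs_add_le _ _).trans (add_le_add hfb hgb),
    (norm_add_le _ _).trans (add_le_add hfd hgd)⟩

theorem sub (hf : HasFDerivBoundsAt f b d x) (hg : HasFDerivBoundsAt g b' d' x) :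
    HasFDerivBoundsAt (fun z => f z - g z) (b + b') (d + d') x := by
  obtain ⟨f', hf, hfb, hfd⟩ := hf
  obtain ⟨g', hg, hgb, hgd⟩ := hg
  exact ⟨f' - g', hf.sub hg, (abs_sub _ _).trans (add_le_add hfb hgb),
    (norm_sub_le _ _).trans (add_le_add hfd hgd)⟩

theorem mul (hf : HasFDerivBoundsAt f b d x) (hg : HasFDerivBoundsAt g b' d' x) :
    HasFDerivBoundsAt (fun z => f z * g z) (b * b') (b * d' + b' * d) x := by
  obtain ⟨f', hf, hfb, hfd⟩ := hf
  obtain ⟨g', hg, hgb, hgd⟩ := hg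
  have hb : 0 ≤ b := (abs_nonneg _).trans hfb
  have hb' : 0 ≤ b' := (abs_nonneg _).trans hgb
  refine ⟨f x • g' + g x • f', hf.mul hg, ?_, ?_⟩
  · rw [abs_mul]; exact mul_le_mul hfb hgb (abs_nonneg _) hb
  · refine (norm_add_le _ _).trans (add_le_add ?_ ?_) <;> rw [norm_smul, Real.norm_eq_abs]
    · exact mul_le_mul hfb hgd (norm_nonneg _) hb
    · exact mul_le_mul hgb hfd (norm_nonneg _) hb'

theorem comp {h : ℝ → ℝ} {h' c c' : ℝ} (hf : HasFDerivBoundsAt f b d x)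
    (hh : HasDerivAt h h' (f x)) (hc : |h (f x)| ≤ c) (hc' : |h'| ≤ c') :
    HasFDerivBoundsAt (fun z => h (f z)) c (c' * d) x := by
  obtain ⟨f', hf, -, hfd⟩ := hf
  refine ⟨h' • f', hh.comp_hasFDerivAt x hf, hc, ?_⟩
  rw [norm_smul, Real.norm_eq_abs]
  exact mul_le_mul hc' hfd (norm_nonneg _) ((abs_nonneg _).trans hc')

theorem inv {m : ℝ} (hf : HasFDerivBoundsAt f b d x) (hm : 0 < m) (hmf : m ≤ |f x|) :
    HasFDerivBoundsAt (fun z => (f z)⁻¹) m⁻¹ (d / m ^ 2) x := by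
  have hfx : f x ≠ 0 := abs_pos.1 (hm.trans_le hmf)
  refine (hf.comp (hasDerivAt_inv hfx) ?_ ?_).mono le_rfl (div_eq_inv_mul _ _).ge
  · rw [abs_inv]; exact inv_anti₀ hm hmf
  · rw [abs_neg, abs_inv, abs_pow]
    exact inv_anti₀ (by positivity) (pow_le_pow_left₀ hm.le hmf 2)

theorem div {m : ℝ} (hf : HasFDerivBoundsAt f b d x) (hg : HasFDerivBoundsAt g b' d' x)
    (hm : 0 < m) (hmg : m ≤ |g x|) :
    HasFDerivBoundsAt (fun z => f z / g z) (b / m) (d / m + b * d' / m ^ 2) x := by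
  simp only [div_eq_mul_inv]
  refine (hf.mul (hg.inv hm hmg)).mono le_rfl (le_of_eq ?_)
  ring

theorem pow_two (hf : HasFDerivBoundsAt f b d x) :
    HasFDerivBoundsAt (fun z => f z ^ 2) (b ^ 2) (2 * b * d) x := by
  simp only [sq]
  exact (hf.mul hf).mono le_rfl (by linarith)

end HasFDerivBoundsAt

end Calculus

section InnerProductSpace

variable {F : Type*} [NormedAddCommGroup F] [InnerProductSpace ℝ F] {x : F}

open RealInnerProductSpace

theorem hasFDerivAt_norm_of_ne_zero (hx : x ≠ 0) :
    HasFDerivAt (‖·‖) (‖x‖⁻¹ • innerSL ℝ x) x := by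
  have hsq : HasFDerivAt (fun z : F => Real.sqrt (‖z‖ ^ 2))
      ((1 / (2 * Real.sqrt (‖x‖ ^ 2))) • (2 • innerSL ℝ x)) x :=
    (Real.hasDerivAt_sqrt (by positivity)).comp_hasFDerivAt x
      (hasStrictFDerivAt_norm_sq x).hasFDerivAt
  simp only [Real.sqrt_sq (norm_nonneg _)] at hsq
  convert hsq using 1
  ext h
  simp only [smul_apply, coe_innerSL_apply, smul_eq_mul, nsmul_eq_mul, Nat.cast_ofNat]
  field_simp

theorem hasFDerivBoundsAt_norm (hx : x ≠ 0) : HasFDerivBoundsAt (‖·‖) ‖x‖ 1 x := by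
  refine ⟨_, hasFDerivAt_norm_of_ne_zero hx, (abs_norm x).le, ?_⟩
  rw [norm_smul, innerSL_apply_norm, norm_inv, norm_norm,
    inv_mul_cancel₀ (norm_ne_zero_iff.2 hx)]

theorem hasFDerivBoundsAt_inner_div_norm {e : F} (he : ‖e‖ = 1) (hx : x ≠ 0) :
    HasFDerivBoundsAt (fun z => ⟪e, z⟫ / ‖z‖) 1
      (Real.sqrt (‖x‖ ^ 2 - ⟪e, x⟫ ^ 2) / ‖x‖ ^ 2) x := by
  have hr : 0 < ‖x‖ := norm_pos_iff.2 hx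
  set w : F := ‖x‖⁻¹ • e - (⟪e, x⟫ / ‖x‖ ^ 3) • x
  have hderiv : HasFDerivAt (fun z => ⟪e, z⟫ / ‖z‖) (innerSL ℝ w) x := by
    simp only [div_eq_mul_inv]
    refine ((innerSL ℝ e).hasFDerivAt.mul ((hasDerivAt_inv hr.ne').comp_hasFDerivAt x
      (hasFDerivAt_norm_of_ne_zero hx))).congr_fderiv ?_
    ext h
    simp only [w, coe_innerSL_apply, neg_smul, smul_neg, Function.comp_apply, add_apply,
      neg_apply, smul_apply, smul_eq_mul, map_sub, map_smul, sub_apply, real_inner_comm]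
    field_simp
    ring
  have hw : ‖w‖ ^ 2 = (‖x‖ ^ 2 - ⟪e, x⟫ ^ 2) / (‖x‖ ^ 2) ^ 2 := by
    simp only [w, norm_sub_sq_real, norm_smul, inner_smul_left, inner_smul_right, he,
      Real.norm_eq_abs, abs_inv, abs_div, abs_pow, abs_norm, starRingEnd_apply, star_trivial]
    field_simp
    rw [sq_abs]
    ring
  refine ⟨_, hderiv, ?_, ?_⟩
  · rw [abs_div, abs_norm, div_le_one hr]
    simpa [he] using abs_real_inner_le_norm e x
  · rw [innerSL_apply_norm, ← Real.sqrt_sq (norm_nonneg w), hw, Real.sqrt_div' _ (sq_nonneg _),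
      Real.sqrt_sq (sq_nonneg _)]

end InnerProductSpace

theorem hasFDerivBoundsAt_apply {ι : Type*} [Fintype ι] (x : EuclideanSpace ℝ ι) (i : ι) :
    HasFDerivBoundsAt (fun z : EuclideanSpace ℝ ι => z i) |x i| 1 x :=
  ⟨_, PiLp.hasFDerivAt_apply 2 x i, le_rfl,
    ContinuousLinearMap.opNorm_le_bound _ zero_le_one fun h => by
      simpa using PiLp.norm_apply_le h i⟩

local notation "ℝ³" => EuclideanSpace ℝ (Fin 3)

section EuclideanSpace

variable (x : ℝ³)

theorem primeNorm3_nonneg : 0 ≤ primeNorm3 x :=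
  Real.sqrt_nonneg _

theorem primeNorm3_sq : primeNorm3 x ^ 2 = x 0 ^ 2 + x 1 ^ 2 :=
  Real.sq_sqrt (by positivity)

theorem norm_sq_eq_primeNorm3_sq_add : ‖x‖ ^ 2 = primeNorm3 x ^ 2 + x 2 ^ 2 := by
  rw [EuclideanSpace.real_norm_sq_eq, Fin.sum_univ_three, primeNorm3_sq]

theorem primeNorm3_le_norm : primeNorm3 x ≤ ‖x‖ := by
  refine le_of_sq_le_sq ?_ (norm_nonneg x)
  nlinarith [norm_sq_eq_primeNorm3_sq_add x, sq_nonneg (x 2)]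

theorem abs_apply_zero_le_primeNorm3 : |x 0| ≤ primeNorm3 x := by
  rw [← Real.sqrt_sq_eq_abs]
  exact Real.sqrt_le_sqrt (by nlinarith [sq_nonneg (x 1)])

theorem abs_apply_one_le_primeNorm3 : |x 1| ≤ primeNorm3 x := by
  rw [← Real.sqrt_sq_eq_abs]
  exact Real.sqrt_le_sqrt (by nlinarith [sq_nonneg (x 0)])

theorem hasFDerivBoundsAt_primeNorm3_sq :
    HasFDerivBoundsAt (fun z => primeNorm3 z ^ 2) (primeNorm3 x ^ 2) (4 * primeNorm3 x) x := by
  simp only [primeNorm3_sq]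
  refine ((hasFDerivBoundsAt_apply x 0).pow_two.add (hasFDerivBoundsAt_apply x 1).pow_two).mono
    (by simp) ?_
  linarith [abs_apply_zero_le_primeNorm3 x, abs_apply_one_le_primeNorm3 x]

theorem hasFDerivBoundsAt_cosPolar (hx : x ≠ 0) :
    HasFDerivBoundsAt (fun z : ℝ³ => z 2 / ‖z‖) 1 (primeNorm3 x / ‖x‖ ^ 2) x := by
  have h := hasFDerivBoundsAt_inner_div_norm (e := EuclideanSpace.single 2 1) (by simp) hx
  simp only [EuclideanSpace.inner_single_left, map_one, one_mul] at h
  rwa [norm_sq_eq_primeNorm3_sq_add x, add_sub_cancel_right, Real.sqrt_sq (primeNorm3_nonneg x),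
    ← norm_sq_eq_primeNorm3_sq_add] at h

end EuclideanSpace

theorem one_add_abs_log_sq_le {s : ℝ} (hs : 0 < s) (hs1 : s ≤ 1) :
    1 + |Real.log (s ^ 2)| ≤ 2 / s := by
  have hlog : Real.log s ≤ 0 := Real.log_nonpos hs.le hs1
  have hinv : -Real.log s ≤ s⁻¹ - 1 := by
    rw [← Real.log_inv]; exact Real.log_le_sub_one_of_pos (inv_pos.2 hs)
  rw [Real.log_pow, abs_of_nonpos (by push_cast; linarith), div_eq_mul_inv]
  push_cast
  linarith

structure ProfileBounds (A : ℝ) (U : ℝ → ℝ) : Prop where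
  abs_le : ∀ y ∈ Ioo (-1 : ℝ) 1, |U y| ≤ A * (1 - y ^ 2) * (1 + |Real.log (1 - y ^ 2)|)
  abs_deriv_le : ∀ y ∈ Ioo (-1 : ℝ) 1, |deriv U y| ≤ A * (1 + |Real.log (1 - y ^ 2)|)
  abs_deriv_deriv_le : ∀ y ∈ Ioo (-1 : ℝ) 1, |deriv (deriv U) y| ≤ A / (1 - y ^ 2)

theorem ProfileBounds.le_of_one_sub_sq_eq {A : ℝ} {U : ℝ → ℝ} (hU : ProfileBounds A U)
    (hA : 0 ≤ A) {y s : ℝ} (hy : y ∈ Ioo (-1 : ℝ) 1) (hs : 0 < s) (hys : 1 - y ^ 2 = s ^ 2) :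
    |U y| ≤ 2 * A * s ∧ |deriv U y| ≤ 2 * A / s ∧ |deriv (deriv U) y| ≤ A / s ^ 2 := by
  have hlog := one_add_abs_log_sq_le hs (by nlinarith [sq_nonneg y])
  refine ⟨?_, ?_, hys ▸ hU.abs_deriv_deriv_le y hy⟩
  · calc |U y| ≤ A * s ^ 2 * (1 + |Real.log (s ^ 2)|) := hys ▸ hU.abs_le y hy
      _ ≤ A * s ^ 2 * (2 / s) := mul_le_mul_of_nonneg_left hlog (by positivity)
      _ = 2 * A * s := by field_simp
  · calc |deriv U y| ≤ A * (1 + |Real.log (s ^ 2)|) := hys ▸ hU.abs_deriv_le y hy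
      _ ≤ A * (2 / s) := mul_le_mul_of_nonneg_left hlog hA
      _ = 2 * A / s := by ring

section PolarAngle

variable {x : ℝ³}

theorem primeNorm3_pos (hx : ¬(x 0 = 0 ∧ x 1 = 0)) : 0 < primeNorm3 x := by
  refine Real.sqrt_pos.2 ?_
  rcases not_and_or.1 hx with h | h <;> positivity

theorem norm_pos_of_primeNorm3_pos (hx : 0 < primeNorm3 x) : 0 < ‖x‖ :=
  hx.trans_le (primeNorm3_le_norm x)

theorem cosPolar_mem_Ioo (hx : 0 < primeNorm3 x) : x 2 / ‖x‖ ∈ Ioo (-1 : ℝ) 1 := by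
  have hr := norm_pos_of_primeNorm3_pos hx
  have h : x 2 ^ 2 < ‖x‖ ^ 2 := by nlinarith [norm_sq_eq_primeNorm3_sq_add x]
  have h' : |x 2| < ‖x‖ := abs_lt_of_sq_lt_sq h hr.le
  rw [mem_Ioo, lt_div_iff₀ hr, div_lt_iff₀ hr]
  constructor <;> linarith [abs_lt.1 h']

theorem one_sub_cosPolar_sq (hx : 0 < primeNorm3 x) :
    1 - (x 2 / ‖x‖) ^ 2 = (primeNorm3 x / ‖x‖) ^ 2 := by
  have hr := norm_pos_of_primeNorm3_pos hx
  field_simp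
  linarith [norm_sq_eq_primeNorm3_sq_add x]

theorem hasFDerivBoundsAt_profile_comp_cosPolar {A : ℝ} {U : ℝ → ℝ} (hA : 0 ≤ A)
    (hU : ContDiffOn ℝ 2 U (Ioo (-1) 1)) (hUb : ProfileBounds A U) (hx : 0 < primeNorm3 x) :
    HasFDerivBoundsAt (fun z => U (z 2 / ‖z‖))
      (2 * A * primeNorm3 x / ‖x‖) (2 * A / ‖x‖) x ∧
    HasFDerivBoundsAt (fun z => deriv U (z 2 / ‖z‖))
      (2 * A * ‖x‖ / primeNorm3 x) (A / primeNorm3 x) x := by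
  have hr := norm_pos_of_primeNorm3_pos hx
  have hy := cosPolar_mem_Ioo hx
  have hy_nhds : Ioo (-1 : ℝ) 1 ∈ nhds (x 2 / ‖x‖) := isOpen_Ioo.mem_nhds hy
  obtain ⟨hb0, hb1, hb2⟩ :=
    hUb.le_of_one_sub_sq_eq hA hy (div_pos hx hr) (one_sub_cosPolar_sq hx)
  have hdU := ((hU.differentiableOn (by norm_num)) _ hy).differentiableAt hy_nhds
  have hddU := (((hU.deriv_of_isOpen isOpen_Ioo (m := 1) (by norm_num)).differentiableOn
    (by norm_num)) _ hy).differentiableAt hy_nhds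
  have hY := hasFDerivBoundsAt_cosPolar x (norm_pos_iff.1 hr)
  constructor
  · refine (hY.comp hdU.hasDerivAt hb0 hb1).mono (by rw [mul_div_assoc]) (le_of_eq ?_)
    field_simp
  · refine (hY.comp hddU.hasDerivAt hb1 hb2).mono (by rw [div_div_eq_mul_div]) (le_of_eq ?_)
    field_simp

end PolarAngle

section VelocityTerms

variable {x : ℝ³} {A : ℝ} {V W : ℝ³ → ℝ}

theorem hasFDerivBoundsAt_apply_mul_div_norm_sq (hx : 0 < primeNorm3 x)
    (hV : HasFDerivBoundsAt V (2 * A * ‖x‖ / primeNorm3 x) (A / primeNorm3 x) x) (j : Fin 3) :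
    HasFDerivBoundsAt (fun z => z j * V z / ‖z‖ ^ 2)
      (2 * A / primeNorm3 x) (7 * A / (‖x‖ * primeNorm3 x)) x := by
  have hr := norm_pos_of_primeNorm3_pos hx
  have hxj : |x j| ≤ ‖x‖ := by simpa using PiLp.norm_apply_le x j
  have hN := (hasFDerivBoundsAt_norm (norm_pos_iff.1 hr)).pow_two
  refine ((((hasFDerivBoundsAt_apply x j).mono hxj le_rfl).mul hV).div hN (m := ‖x‖ ^ 2)
    (by positivity) (by rw [abs_pow, abs_norm])).mono (le_of_eq ?_) (le_of_eq ?_)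
  · field_simp
  · field_simp
    ring

theorem hasFDerivBoundsAt_apply_mul_apply_two_mul_div (hA : 0 ≤ A) (hx : 0 < primeNorm3 x)
    (hW : HasFDerivBoundsAt W (2 * A * primeNorm3 x / ‖x‖) (2 * A / ‖x‖) x) (i : Fin 3)
    (hi : |x i| ≤ primeNorm3 x) :
    HasFDerivBoundsAt (fun z => z i * z 2 * W z / (‖z‖ * primeNorm3 z ^ 2))
      (2 * A / ‖x‖) (16 * A / (‖x‖ * primeNorm3 x)) x := by
  have hr := norm_pos_of_primeNorm3_pos hx
  have hρr := primeNorm3_le_norm x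
  have hx2 : |x 2| ≤ ‖x‖ := by simpa using PiLp.norm_apply_le x 2
  have hden :=
    (hasFDerivBoundsAt_norm (norm_pos_iff.1 hr)).mul (hasFDerivBoundsAt_primeNorm3_sq x)
  refine (((((hasFDerivBoundsAt_apply x i).mono hi le_rfl).mul
    ((hasFDerivBoundsAt_apply x 2).mono hx2 le_rfl)).mul hW).div hden
    (m := ‖x‖ * primeNorm3 x ^ 2) (by positivity) (by rw [abs_mul, abs_norm, abs_sq])).mono
    (le_of_eq ?_) ?_
  · field_simp
  · field_simp
    nlinarith [mul_le_mul_of_nonneg_left hρr hA]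

theorem hasFDerivBoundsAt_div_norm (hA : 0 ≤ A) (hx : 0 < primeNorm3 x)
    (hW : HasFDerivBoundsAt W (2 * A * primeNorm3 x / ‖x‖) (2 * A / ‖x‖) x) :
    HasFDerivBoundsAt (fun z => W z / ‖z‖)
      (2 * A / ‖x‖) (4 * A / (‖x‖ * primeNorm3 x)) x := by
  have hr := norm_pos_of_primeNorm3_pos hx
  have hρr := primeNorm3_le_norm x
  refine (hW.div (hasFDerivBoundsAt_norm (norm_pos_iff.1 hr)) (m := ‖x‖) hr
    (abs_norm x).ge).mono ?_ ?_
  · field_simp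
    exact mul_le_mul_of_nonneg_left hρr hA
  · field_simp
    nlinarith [mul_le_mul_of_nonneg_left hρr (mul_nonneg hA hx.le),
      mul_le_mul_of_nonneg_left hρr (mul_nonneg hA hr.le)]

end VelocityTerms

theorem hsNorm_le_of_norm_fderiv_apply_le {v : ℝ³ → ℝ³} {x : ℝ³} {M : ℝ}
    (hv : ∀ i, DifferentiableAt ℝ (fun z => v z i) x)
    (hM : ∀ i, ‖fderiv ℝ (fun z => v z i) x‖ ≤ M) :
    DifferentiableAt ℝ v x ∧ hsNorm v x ≤ 3 * M := by
  have hd : DifferentiableAt ℝ v x := (differentiableAt_piLp 2).2 hv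
  have hM0 : 0 ≤ M := (norm_nonneg _).trans (hM 0)
  have hentry (i j : Fin 3) : (fderiv ℝ v x (EuclideanSpace.single j 1) i) ^ 2 ≤ M ^ 2 := by
    have hcomp : fderiv ℝ (fun z => v z i) x = (PiLp.proj 2 _ i).comp (fderiv ℝ v x) :=
      ((PiLp.hasFDerivAt_apply 2 (v x) i).comp x hd.hasFDerivAt :).fderiv
    have h := (fderiv ℝ (fun z => v z i) x).le_of_opNorm_le (hM i) (EuclideanSpace.single j 1)
    rw [hcomp] at h
    simp only [ContinuousLinearMap.comp_apply, PiLp.proj_apply, PiLp.norm_single, norm_one,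
      mul_one, Real.norm_eq_abs] at h
    exact sq_le_sq' (abs_le.1 h).1 (abs_le.1 h).2
  refine ⟨hd, ?_⟩
  calc hsNorm v x ≤ Real.sqrt (∑ _i : Fin 3, ∑ _j : Fin 3, M ^ 2) :=
        Real.sqrt_le_sqrt (Finset.sum_le_sum fun i _ => Finset.sum_le_sum fun j _ => hentry i j)
    _ = 3 * M := by
        rw [← Real.sqrt_sq (by positivity : 0 ≤ 3 * M)]
        congr 1
        simp only [Finset.sum_const, Finset.card_univ, Fintype.card_fin, nsmul_eq_mul,
          Nat.cast_ofNat]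
        ring

theorem exists_hasFDerivBoundsAt_velField_apply {A : ℝ} {U : ℝ → ℝ} (hA : 0 ≤ A)
    (hU : ContDiffOn ℝ 2 U (Ioo (-1) 1)) (hUb : ProfileBounds A U) {x : ℝ³}
    (hx : 0 < primeNorm3 x) (i : Fin 3) :
    ∃ b, HasFDerivBoundsAt (fun z => velField U z i) b (23 * A / (‖x‖ * primeNorm3 x)) x := by
  obtain ⟨hW, hV⟩ := hasFDerivBoundsAt_profile_comp_cosPolar hA hU hUb hx
  have hT1 := hasFDerivBoundsAt_apply_mul_div_norm_sq hx hV
  have hT2 := hasFDerivBoundsAt_apply_mul_apply_two_mul_div hA hx hW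
  fin_cases i <;> simp only [velField, Fin.zero_eta, Fin.mk_one, Fin.reduceFinMk, Fin.isValue,
    Fin.reduceEq, ↓reduceIte]
  · exact ⟨_, ((hT1 0).add (hT2 0 (abs_apply_zero_le_primeNorm3 x))).mono le_rfl
      (le_of_eq (by ring))⟩
  · exact ⟨_, ((hT1 1).add (hT2 1 (abs_apply_one_le_primeNorm3 x))).mono le_rfl
      (le_of_eq (by ring))⟩
  · refine ⟨_, ((hT1 2).sub (hasFDerivBoundsAt_div_norm hA hx hW)).mono le_rfl ?_⟩
    rw [← add_div]
    gcongr
    linarith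

/-- Gradient bound for the associated velocity field (Corollary 2.2, estimate (2.17)). -/
theorem stmt10 :
    ∃ C > 0, ∀ A : ℝ, 0 < A → ∀ U : ℝ → ℝ,
      ContinuousOn U (Icc (-1) 1) → ContDiffOn ℝ 2 U (Ioo (-1) 1) →
      (∀ y ∈ Ioo (-1 : ℝ) 1, |U y| ≤ A * (1 - y ^ 2) * (1 + |Real.log (1 - y ^ 2)|)) →
      (∀ y ∈ Ioo (-1 : ℝ) 1, |deriv U y| ≤ A * (1 + |Real.log (1 - y ^ 2)|)) →
      (∀ y ∈ Ioo (-1 : ℝ) 1, |deriv (deriv U) y| ≤ A / (1 - y ^ 2)) →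
      ∀ x : EuclideanSpace ℝ (Fin 3), ¬(x 0 = 0 ∧ x 1 = 0) →
        DifferentiableAt ℝ (velField U) x ∧
        hsNorm (velField U) x ≤ C * A / (‖x‖ * primeNorm3 x) := by
  refine ⟨69, by norm_num, fun A hA U _ hU hU0 hU1 hU2 x hx => ?_⟩
  choose b hb using
    exists_hasFDerivBoundsAt_velField_apply hA.le hU ⟨hU0, hU1, hU2⟩ (primeNorm3_pos hx)
  obtain ⟨hd, hle⟩ := hsNorm_le_of_norm_fderiv_apply_le (fun i => (hb i).differentiableAt)
    (fun i => (hb i).norm_fderiv_le)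
  exact ⟨hd, hle.trans_eq (by ring)⟩
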